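/- arXiv:1406.1049 — 7 statements merged into one kernel-verified Lean document; each statement's English description precedes it below -/
import Mathlib

section
/- For every finite abelian group G acting on a finite set X of cardinality n, there exists a basis X̂ of ℂ^X consisting of G-linear functions such that X̂ is closed under complex conjugation and ⟨λ, μ⟩ = n·δ_{λμ} for all λ, μ ∈ X̂ (i.e., X̂ is an n-normal orthogonal basis). -/
/-!
Split `X` into `G`-orbits. On the orbit of `b`, identified with `G ⧸ Stab b`, every character `χ`
of the finite abelian group `G ⧸ Stab b` gives the function `g • b ↦ χ g`, extended by zero off the
orbit; it is `G`-linear for the character `χ ∘ mk` of `G`, its conjugate comes from `χ⁻¹`, and the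
orthogonality of characters makes these functions pairwise orthogonal with squared norm the size
of the orbit. Rescaling each orbit's functions by `√(n / |orbit|)` and using that a finite abelian
group has as many characters as elements yields `n` orthogonal, hence linearly independent,
functions on `X`: a basis of `ℂ^X`.
-/

open Finset MulAction ComplexConjugate

theorem conj_coe_hom_units {Q : Type*} [Group Q] [Finite Q] (χ : Q →* ℂˣ) (q : Q) :
    conj (χ q : ℂ) = (χ⁻¹ q : ℂ) := by
  have hpow : (χ q : ℂ) ^ Nat.card Q = 1 := by
    rw [← Units.val_pow_eq_pow_val, ← map_pow, pow_card_eq_one', map_one, Units.val_one]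
  rw [← Complex.inv_eq_conj (Complex.norm_eq_one_of_pow_eq_one hpow Nat.card_pos.ne'),
    MonoidHom.inv_apply, Units.val_inv_eq_inv_val]

theorem nonempty_monoidHom_units_mulEquiv (Q : Type*) [CommGroup Q] [Finite Q] :
    Nonempty ((Q →* ℂˣ) ≃* Q) :=
  have : NeZero (Monoid.exponent Q) := ⟨Monoid.exponent_ne_zero_of_finite⟩
  CommGroup.monoidHom_mulEquiv_of_hasEnoughRootsOfUnity Q ℂ

theorem Fintype.sum_eq_sum_subtype_of_notMem {α M : Type*} [Fintype α] [AddCommMonoid M]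
    (s : Set α) [DecidablePred (· ∈ s)] {f : α → M} (hf : ∀ a ∉ s, f a = 0) :
    ∑ a, f a = ∑ a : s, f a := by
  rw [← Fintype.sum_subtype_add_sum_subtype (· ∈ s),
    Fintype.sum_eq_zero _ fun a : {a // a ∉ s} => hf a a.2, add_zero]

theorem linearIndependent_of_ne_zero_of_sum_mul_conj_eq_zero {ι X : Type*} [Fintype X]
    {v : ι → X → ℂ} (hz : ∀ i, v i ≠ 0)
    (ho : Pairwise fun i j => ∑ x, v i x * conj (v j x) = 0) : LinearIndependent ℂ v := by
  have : LinearIndependent ℂ fun i => (WithLp.toLp 2 (v i) : EuclideanSpace ℂ X) :=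
    linearIndependent_of_ne_zero_of_inner_eq_zero (by simpa using hz) fun i j hij => by
      simpa [PiLp.inner_apply, mul_comm] using ho hij.symm
  exact this.of_comp (WithLp.linearEquiv 2 ℂ (X → ℂ)).symm.toLinearMap

namespace GDual

variable {G X : Type*} [CommGroup G] [MulAction G X]

open scoped Classical in
noncomputable def orbitChar (b : X) (χ : G ⧸ stabilizer G b →* ℂˣ) (x : X) : ℂ :=
  if h : x ∈ orbit G b then χ (orbitEquivQuotientStabilizer G b ⟨x, h⟩) else 0

section OrbitChar

variable {b : X} (χ : G ⧸ stabilizer G b →* ℂˣ)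

theorem orbitChar_of_mem {x : X} (h : x ∈ orbit G b) :
    orbitChar b χ x = χ (orbitEquivQuotientStabilizer G b ⟨x, h⟩) :=
  dif_pos h

theorem orbitChar_of_notMem {x : X} (h : x ∉ orbit G b) : orbitChar b χ x = 0 :=
  dif_neg h

theorem orbitChar_smul_self (g : G) : orbitChar b χ (g • b) = χ g := by
  rw [orbitChar_of_mem χ (mem_orbit b g), ((Equiv.eq_symm_apply _).mp (Subtype.ext rfl) :
    orbitEquivQuotientStabilizer G b ⟨g • b, _⟩ = g)]

theorem orbitChar_smul (α : G) (x : X) : orbitChar b χ (α • x) = χ α * orbitChar b χ x := by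
  by_cases hx : x ∈ orbit G b
  · obtain ⟨g, rfl⟩ := hx
    rw [smul_smul, orbitChar_smul_self, orbitChar_smul_self, QuotientGroup.mk_mul, map_mul,
      Units.val_mul]
  · have hαx : α • x ∉ orbit G b := by rwa [← orbit_eq_iff, orbit_smul, orbit_eq_iff]
    rw [orbitChar_of_notMem χ hx, orbitChar_of_notMem χ hαx, mul_zero]

theorem conj_orbitChar [Finite G] (x : X) : conj (orbitChar b χ x) = orbitChar b χ⁻¹ x := by
  by_cases hx : x ∈ orbit G b
  · obtain ⟨g, rfl⟩ := hx
    rw [orbitChar_smul_self, orbitChar_smul_self, conj_coe_hom_units]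
  · rw [orbitChar_of_notMem χ hx, orbitChar_of_notMem χ⁻¹ hx, map_zero]

theorem sum_orbitChar_mul_conj [Finite G] [Fintype X]
    [DecidableEq (G ⧸ stabilizer G b →* ℂˣ)] (μ : G ⧸ stabilizer G b →* ℂˣ) :
    ∑ x, orbitChar b χ x * conj (orbitChar b μ x) =
      if χ = μ then (Nat.card (orbit G b) : ℂ) else 0 := by
  classical
  have := Fintype.ofFinite (G ⧸ stabilizer G b)
  let e := orbitEquivQuotientStabilizer G b
  let ψ : G ⧸ stabilizer G b →* ℂ := (Units.coeHom ℂ).comp (χ / μ)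
  have hψ : ψ = 1 ↔ χ = μ := by
    rw [← div_eq_one (a := χ)]
    exact ⟨fun h => MonoidHom.ext fun q => Units.ext (DFunLike.congr_fun h q),
      fun h => by simp [ψ, h]⟩
  have hterm (y : orbit G b) : orbitChar b χ y * conj (orbitChar b μ y) = ψ (e y) := by
    rw [conj_orbitChar, orbitChar_of_mem _ y.2, orbitChar_of_mem _ y.2]
    simp [ψ, e, div_eq_mul_inv]
  calc ∑ x, orbitChar b χ x * conj (orbitChar b μ x)
      = ∑ y : orbit G b, ψ (e y) := by
        rw [Fintype.sum_eq_sum_subtype_of_notMem (orbit G b) fun x hx => by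
          rw [orbitChar_of_notMem χ hx, zero_mul]]
        exact Fintype.sum_congr _ _ hterm
    _ = _ := by
        rw [e.sum_comp ψ, sum_hom_units, Nat.card_congr e, Nat.card_eq_fintype_card]
        by_cases h : χ = μ <;> simp [h, hψ]

end OrbitChar

theorem orbitChar_mul_conj_eq_zero_of_ne {ω ω' : orbitRel.Quotient G X} (hne : ω ≠ ω')
    (χ : G ⧸ stabilizer G ω.out →* ℂˣ) (μ : G ⧸ stabilizer G ω'.out →* ℂˣ) (x : X) :
    orbitChar ω.out χ x * conj (orbitChar ω'.out μ x) = 0 := by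
  have mem_iff {ω : orbitRel.Quotient G X} : x ∈ orbit G ω.out ↔ Quotient.mk'' x = ω := by
    rw [← orbitRel.Quotient.orbit_eq_orbit_out ω Quotient.out_eq', orbitRel.Quotient.mem_orbit]
  by_cases hx : x ∈ orbit G ω.out
  · have hx' : x ∉ orbit G ω'.out := fun hx' =>
      hne ((mem_iff.mp hx).symm.trans (mem_iff.mp hx'))
    rw [orbitChar_of_notMem μ hx', map_zero, mul_zero]
  · rw [orbitChar_of_notMem χ hx, zero_mul]

variable (G X) in
abbrev Index := Σ ω : orbitRel.Quotient G X, (G ⧸ stabilizer G ω.out →* ℂˣ)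

noncomputable def charEquivOrbit [Finite G] (b : X) : (G ⧸ stabilizer G b →* ℂˣ) ≃ orbit G b :=
  (nonempty_monoidHom_units_mulEquiv _).some.toEquiv.trans (orbitEquivQuotientStabilizer G b).symm

noncomputable def indexEquiv [Finite G] : Index G X ≃ X :=
  (Equiv.sigmaCongrRight fun ω : orbitRel.Quotient G X => charEquivOrbit ω.out).trans
    (selfEquivSigmaOrbits G X).symm

section Scaled

variable [Fintype X]

noncomputable def scale (ω : orbitRel.Quotient G X) : ℝ :=
  √(Fintype.card X / Nat.card (orbit G ω.out))

theorem scale_mul_scale_mul_card_orbit (ω : orbitRel.Quotient G X) :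
    (scale ω : ℂ) * scale ω * Nat.card (orbit G ω.out) = Fintype.card X := by
  have : Nonempty (orbit G ω.out) := ⟨⟨ω.out, mem_orbit_self _⟩⟩
  have hcard : (Nat.card (orbit G ω.out) : ℝ) ≠ 0 := by exact_mod_cast Nat.card_pos.ne'
  have h : scale ω * scale ω * Nat.card (orbit G ω.out) = Fintype.card X := by
    rw [scale, Real.mul_self_sqrt (by positivity), div_mul_cancel₀ _ hcard]
  exact_mod_cast h

noncomputable def scaledOrbitChar (i : Index G X) (x : X) : ℂ :=
  scale i.1 * orbitChar i.1.out i.2 x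

theorem scaledOrbitChar_smul (i : Index G X) (α : G) (x : X) :
    scaledOrbitChar i (α • x) = i.2 α * scaledOrbitChar i x := by
  rw [scaledOrbitChar, scaledOrbitChar, orbitChar_smul, mul_left_comm]

theorem conj_scaledOrbitChar [Finite G] (i : Index G X) :
    (fun x => conj (scaledOrbitChar i x)) = scaledOrbitChar ⟨i.1, i.2⁻¹⟩ := by
  ext x
  rw [scaledOrbitChar, map_mul, Complex.conj_ofReal, conj_orbitChar]
  rfl

theorem sum_scaledOrbitChar_mul_conj [Finite G] [DecidableEq (Index G X)] (i j : Index G X) :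
    ∑ x, scaledOrbitChar i x * conj (scaledOrbitChar j x) =
      if i = j then (Fintype.card X : ℂ) else 0 := by
  classical
  obtain ⟨ω, χ⟩ := i
  obtain ⟨ω', μ⟩ := j
  by_cases hω : ω = ω'
  · subst hω
    simp only [scaledOrbitChar, map_mul, Complex.conj_ofReal, mul_mul_mul_comm, ← mul_sum,
      sum_orbitChar_mul_conj, Sigma.mk.inj_iff, heq_eq_eq, true_and]
    split_ifs
    · exact scale_mul_scale_mul_card_orbit ω
    · exact mul_zero _
  · rw [if_neg fun h => hω (congrArg Sigma.fst h)]
    refine sum_eq_zero fun x _ => ?_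
    rw [scaledOrbitChar, scaledOrbitChar, map_mul, mul_mul_mul_comm,
      orbitChar_mul_conj_eq_zero_of_ne hω, mul_zero]

theorem linearIndependent_scaledOrbitChar [Finite G] :
    LinearIndependent ℂ (scaledOrbitChar : Index G X → X → ℂ) := by
  classical
  refine linearIndependent_of_ne_zero_of_sum_mul_conj_eq_zero (fun i hi => ?_) fun i j hij => ?_
  · have : Nonempty X := ⟨i.1.out⟩
    have h := sum_scaledOrbitChar_mul_conj i i
    simp only [hi, Pi.zero_apply, zero_mul, sum_const_zero, if_true] at h
    exact Fintype.card_ne_zero (Nat.cast_eq_zero.mp h.symm)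
  · simp only [sum_scaledOrbitChar_mul_conj, if_neg hij]

end Scaled

end GDual

open GDual in
/-- Existence of a G-dual X̂ of X: an n-normal orthogonal spanning set of
cardinality n = |X| consisting of G-linear functions, closed under conjugation. -/
theorem stmt8 {G X : Type*} [CommGroup G] [Fintype G] [Fintype X] [MulAction G X] :
    ∃ Λ : Finset (X → ℂ),
      Λ.card = Fintype.card X ∧
      (∀ lam ∈ Λ, ∃ ψ : G →* ℂ, ∀ (α : G) (x : X), lam (α • x) = ψ α * lam x) ∧
      (∀ lam ∈ Λ, (fun x => (starRingEnd ℂ) (lam x)) ∈ Λ) ∧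
      (∀ lam ∈ Λ, ∀ mu ∈ Λ,
        ∑ x : X, lam x * (starRingEnd ℂ) (mu x)
          = if lam = mu then (Fintype.card X : ℂ) else 0) ∧
      Submodule.span ℂ (Λ : Set (X → ℂ)) = ⊤ := by
  classical
  let _ : Fintype (Index G X) := Fintype.ofEquiv X (indexEquiv (G := G)).symm
  have hinj := (linearIndependent_scaledOrbitChar (G := G) (X := X)).injective
  have hcard : Fintype.card (Index G X) = Fintype.card X := Fintype.card_congr indexEquiv
  refine ⟨univ.image (scaledOrbitChar (G := G)), ?_, ?_, ?_, ?_, ?_⟩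
  · rw [card_image_of_injective _ hinj, card_univ, hcard]
  · simp only [mem_image, mem_univ, true_and, forall_exists_index, forall_apply_eq_imp_iff]
    exact fun i => ⟨(Units.coeHom ℂ).comp (i.2.comp (QuotientGroup.mk' _)), scaledOrbitChar_smul i⟩
  · simp only [mem_image, mem_univ, true_and, forall_exists_index, forall_apply_eq_imp_iff]
    exact fun i => ⟨_, (conj_scaledOrbitChar i).symm⟩
  · simp only [mem_image, mem_univ, true_and, forall_exists_index, forall_apply_eq_imp_iff]
    intro i j
    rw [sum_scaledOrbitChar_mul_conj]
    exact if_congr hinj.eq_iff.symm rfl rfl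
  · rw [coe_image, coe_univ, Set.image_univ]
    exact linearIndependent_scaledOrbitChar.span_eq_top_of_card_eq_finrank'
      (by rw [hcard, Module.finrank_fintype_fun_eq_card])
end

section
/- For σ : G → ℂ, f : X → ℂ, and λ ∈ X̂ a ψ_λ-linear basis element, the Fourier transform of the convolution satisfies (σ∗f)^(λ) = σ̂(ψ_λ)·f̂(λ), where σ̂(ψ) = Σ_{α∈G} σ(α)ψ(α) and f̂(λ) = Σ_{x∈X} f(x)λ(x). -/
open Finset

theorem sum_inv_smul_mul_eq_of_smul_eq_mul {G X R : Type*} [Group G] [MulAction G X] [Fintype X]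
    [CommSemiring R] (f lam : X → R) (α : G) (c : R) (h : ∀ x, lam (α • x) = c * lam x) :
    ∑ x : X, f (α⁻¹ • x) * lam x = c * ∑ x : X, f x * lam x := by
  rw [← Equiv.sum_comp (MulAction.toPerm α), mul_sum]
  refine sum_congr rfl fun x _ => ?_
  simp only [MulAction.toPerm_apply, inv_smul_smul, h]
  ring

/-- Fourier transform of a convolution: (σ∗f)^(λ) = σ̂(ψ_λ)·f̂(λ),
for λ a ψ-linear function. -/
theorem stmt11 {G X : Type*} [CommGroup G] [Fintype G] [Fintype X] [MulAction G X]
    (σ : G → ℂ) (f : X → ℂ) (lam : X → ℂ) (ψ : G →* ℂ)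
    (hlin : ∀ (α : G) (x : X), lam (α • x) = ψ α * lam x) :
    ∑ x : X, (∑ α : G, σ α * f (α⁻¹ • x)) * lam x
      = (∑ α : G, σ α * ψ α) * ∑ x : X, f x * lam x := by
  calc ∑ x : X, (∑ α : G, σ α * f (α⁻¹ • x)) * lam x
      = ∑ α : G, σ α * ∑ x : X, f (α⁻¹ • x) * lam x := by
        simp_rw [sum_mul, mul_sum, mul_assoc]
        exact sum_comm
    _ = ∑ α : G, σ α * (ψ α * ∑ x : X, f x * lam x) := by
        simp_rw [sum_inv_smul_mul_eq_of_smul_eq_mul f lam _ _ (hlin _)]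
    _ = (∑ α : G, σ α * ψ α) * ∑ x : X, f x * lam x := by
        simp_rw [sum_mul, mul_assoc]
end

section
/- Parseval-type identity with a twist: for f, g : X → ℂ and α ∈ G, ⟨α⁻¹·f, g⟩ = (1/n) Σ_{ψ∈Ĝ} ψ(α) Σ_{λ∈(X̂)_ψ} f̂(conj(λ))·conj(ĝ(conj(λ))), where (α⁻¹·f)(x) = f(αx). In particular, taking α = 1, ⟨f, g⟩ = (1/n)⟨f̂, ĝ⟩. -/
/-!
The n × n matrix M = (λ(x)) satisfies M Mᴴ = n·1, hence also Mᴴ M = n·1, and column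
orthogonality is exactly Parseval's identity for the transforms. The twist by α is absorbed into
g: since λ(α x) = ψ(α) λ(x), the factor ψ(α) · conj ĝ(conj λ) is the conjugated transform of
x ↦ g(α⁻¹ x) at conj λ, and reindexing by α turns ⟨f, g(α⁻¹ ·)⟩ into ⟨α⁻¹·f, g⟩.
-/

open Finset

namespace Matrix

theorem mul_eq_smul_one_comm {K ι : Type*} [Field K] [Fintype ι] [DecidableEq ι]
    {A B : Matrix ι ι K} {c : K} (hc : c ≠ 0) (h : A * B = c • 1) : B * A = c • 1 := by
  have hinv : (c⁻¹ • A) * B = 1 := by rw [smul_mul, h, smul_smul, inv_mul_cancel₀ hc, one_smul]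
  have := mul_eq_one_comm.mp hinv
  rwa [Matrix.mul_smul, inv_smul_eq_iff₀ hc] at this

theorem vecMul_dotProduct_star_vecMul {R m n : Type*} [CommSemiring R] [StarRing R]
    [Fintype m] [Fintype n] [DecidableEq m] {N : Matrix m n R} {c : R} (h : N * Nᴴ = c • 1)
    (f g : m → R) : (f ᵥ* N) ⬝ᵥ star (g ᵥ* N) = c * (f ⬝ᵥ star g) := by
  rw [star_vecMul, dotProduct_mulVec, vecMul_vecMul, h, vecMul_smul, vecMul_one, smul_dotProduct,
    smul_eq_mul]

end Matrix

open Matrix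

theorem mul_star_sum_mul_star_eq_of_map_smul {R G X : Type*} [CommSemiring R] [StarRing R]
    [Group G] [MulAction G X] [Fintype X] {l : X → R} {c : R} {α : G}
    (hl : ∀ x, l (α • x) = c * l x) (g : X → R) :
    c * star (∑ x, g x * star (l x)) = star (∑ x, g (α⁻¹ • x) * star (l x)) := by
  simp only [star_sum, star_mul, star_star, mul_sum]
  conv_rhs => rw [← Equiv.sum_comp (MulAction.toPerm α)]
  simp [hl, mul_assoc]

theorem stmt12_general {G X : Type*} [CommGroup G] [Fintype X] [DecidableEq X] [MulAction G X]
    (Λ : X → (X → ℂ)) (Ψ : X → (G →* ℂ))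
    (horth : ∀ i j : X, ∑ x : X, Λ i x * (starRingEnd ℂ) (Λ j x)
      = if i = j then (Fintype.card X : ℂ) else 0)
    (hlin : ∀ (i : X) (α : G) (x : X), Λ i (α • x) = Ψ i α * Λ i x)
    (f g : X → ℂ) (α : G) :
    (∑ x : X, f (α • x) * (starRingEnd ℂ) (g x)
      = (1 / (Fintype.card X : ℂ)) * ∑ i : X, Ψ i α *
          ((∑ x : X, f x * (starRingEnd ℂ) (Λ i x)) *
            (starRingEnd ℂ) (∑ x : X, g x * (starRingEnd ℂ) (Λ i x)))) ∧
    (∑ x : X, f x * (starRingEnd ℂ) (g x)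
      = (1 / (Fintype.card X : ℂ)) * ∑ i : X,
          (∑ x : X, f x * Λ i x) * (starRingEnd ℂ) (∑ x : X, g x * Λ i x)) := by
  rcases isEmpty_or_nonempty X with _ | _
  · simp
  set n : ℂ := (Fintype.card X : ℂ)
  have hn : n ≠ 0 := by simp [n]
  let M : Matrix X X ℂ := Matrix.of Λ
  have hrow : M * Mᴴ = n • 1 := by
    ext i j
    simpa [M, Matrix.mul_apply, Matrix.one_apply] using horth i j
  have hcol : Mᴴ * M = n • 1 := mul_eq_smul_one_comm hn hrow
  simp only [one_div, eq_inv_mul_iff_mul_eq₀ hn, starRingEnd_apply]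
  constructor
  · have parseval : ∑ i, (∑ x, f x * star (Λ i x)) * star (∑ y, g (α⁻¹ • y) * star (Λ i y))
        = n * ∑ x, f x * star (g (α⁻¹ • x)) :=
      vecMul_dotProduct_star_vecMul (N := Mᴴ) (by rwa [conjTranspose_conjTranspose]) _ _
    calc n * ∑ x, f (α • x) * star (g x) = n * ∑ x, f x * star (g (α⁻¹ • x)) := by
          rw [← Equiv.sum_comp (MulAction.toPerm α) (fun x => f x * star (g (α⁻¹ • x)))]
          simp
      _ = _ := parseval.symm
      _ = _ := by
          refine sum_congr rfl fun i _ => ?_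
          rw [mul_left_comm, mul_star_sum_mul_star_eq_of_map_smul (hlin i α)]
  · exact (vecMul_dotProduct_star_vecMul (N := Mᵀ) (by
      rw [conjTranspose_transpose_eq_transpose_conjTranspose, ← transpose_mul, hcol,
        transpose_smul, transpose_one]) f g).symm

/-- Twisted Parseval identity: ⟨α⁻¹·f, g⟩ = (1/n) Σ_λ ψ_λ(α) f̂(conj λ) conj(ĝ(conj λ)),
the sum over the G-dual grouped by the characters ψ_λ; in particular (α = 1)
⟨f,g⟩ = (1/n)⟨f̂,ĝ⟩. -/
theorem stmt12 {G X : Type*} [CommGroup G] [Fintype G] [Fintype X] [DecidableEq X] [MulAction G X]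
    (Λ : X → (X → ℂ)) (Ψ : X → (G →* ℂ))
    (horth : ∀ i j : X, ∑ x : X, Λ i x * (starRingEnd ℂ) (Λ j x)
      = if i = j then (Fintype.card X : ℂ) else 0)
    (hlin : ∀ (i : X) (α : G) (x : X), Λ i (α • x) = Ψ i α * Λ i x)
    (f g : X → ℂ) (α : G) :
    (∑ x : X, f (α • x) * (starRingEnd ℂ) (g x)
      = (1 / (Fintype.card X : ℂ)) * ∑ i : X, Ψ i α *
          ((∑ x : X, f x * (starRingEnd ℂ) (Λ i x)) *
            (starRingEnd ℂ) (∑ x : X, g x * (starRingEnd ℂ) (Λ i x)))) ∧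
    (∑ x : X, f x * (starRingEnd ℂ) (g x)
      = (1 / (Fintype.card X : ℂ)) * ∑ i : X,
          (∑ x : X, f x * Λ i x) * (starRingEnd ℂ) (∑ x : X, g x * Λ i x)) :=
  stmt12_general Λ Ψ horth hlin f g α
end

section
/- A unitary function f : X → T (|f(x)|=1) is bent, i.e., Σ_{λ∈(X̂)_ψ} |f̂(λ)|² = n²/m for every irreducible character ψ of G, if and only if f has totally balanced derivatives: Σ_{x∈X} f(αx)·conj(f(x)) = 0 for every non-identity α ∈ G. -/
/-!
Up to the factor `√n`, `Λ` is a unitary matrix, so its columns are orthogonal as well as its rows.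
Together with `Λ i (α • x) = Ψ i α * Λ i x` this gives
`∑ i, |f̂ i|² Ψ i α = n · conj (∑ x, f (α • x) conj (f x))`.
The left side is the inverse Fourier transform on `G` of the fibre energies
`E ψ = ∑_{Ψ i = ψ} |f̂ i|²`, so by the two orthogonality relations for the characters of `G`,
`E` is constant exactly when the autocorrelation vanishes off `α = 1`; at `α = 1` it equals `n`
because `|f| = 1`.
-/

open Finset ComplexConjugate
open scoped Matrix

theorem Matrix.mul_eq_smul_one_comm_s15 {n K : Type*} [Fintype n] [DecidableEq n] [Field K]
    {A B : Matrix n n K} {c : K} (hc : c ≠ 0) : A * B = c • 1 ↔ B * A = c • 1 := by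
  have h_smul_inv : ∀ M : Matrix n n K, M = c • 1 ↔ c⁻¹ • M = 1 := fun M => by
    rw [inv_smul_eq_iff₀ hc, eq_comm]
  rw [h_smul_inv, h_smul_inv, ← Matrix.mul_smul, ← Matrix.smul_mul]
  exact mul_eq_one_comm

theorem orthogonal_cols_of_orthogonal_rows {X : Type*} [Fintype X] [DecidableEq X]
    {Λ : X → X → ℂ}
    (horth : ∀ i j, ∑ x, Λ i x * conj (Λ j x) = if i = j then (Fintype.card X : ℂ) else 0)
    (x y : X) : ∑ i, Λ i x * conj (Λ i y) = if x = y then (Fintype.card X : ℂ) else 0 := by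
  have : Nonempty X := ⟨x⟩
  have hn : (Fintype.card X : ℂ) ≠ 0 := Nat.cast_ne_zero.2 Fintype.card_ne_zero
  let A : Matrix X X ℂ := Matrix.of Λ
  have hrows : A * Aᴴ = (Fintype.card X : ℂ) • 1 := by
    ext i j
    simp [A, Matrix.mul_apply, horth, Matrix.one_apply]
  have hcols := congrFun (congrFun ((Matrix.mul_eq_smul_one_comm_s15 hn).1 hrows) y) x
  simpa [A, Matrix.mul_apply, Matrix.one_apply, mul_comm, eq_comm] using hcols

section Characters

variable {G R : Type*} [CommGroup G] [Fintype G] [CommRing R] [IsDomain R]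

-- `ψ α⁻¹` plays the role of `conj (ψ α)`, which makes sense over any domain.
theorem sum_apply_mul_apply_inv_eq_ite [DecidableEq (G →* R)] (ψ₁ ψ₂ : G →* R) :
    ∑ α, ψ₁ α * ψ₂ α⁻¹ = if ψ₁ = ψ₂ then (Fintype.card G : R) else 0 := by
  split_ifs with h
  · simp [h, ← map_mul]
  · refine sum_hom_units_eq_zero (ψ₁ * ψ₂.comp invMonoidHom) fun htriv => ?_
    refine h (MonoidHom.ext fun α => ?_)
    have hα : ψ₁ α * ψ₂ α⁻¹ = 1 := DFunLike.congr_fun htriv α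
    calc ψ₁ α = ψ₁ α * (ψ₂ α⁻¹ * ψ₂ α) := by rw [← map_mul, inv_mul_cancel, map_one, mul_one]
      _ = ψ₂ α := by rw [← mul_assoc, hα, one_mul]

theorem sum_monoidHom_apply_eq_zero [Fintype (G →* R)]
    [HasEnoughRootsOfUnity R (Monoid.exponent G)] {α : G} (hα : α ≠ 1) :
    ∑ ψ : G →* R, ψ α = 0 := by
  obtain ⟨χ, hχ⟩ := CommGroup.exists_apply_ne_one_of_hasEnoughRootsOfUnity G R hα
  let e : (G →* R) ≃* (G →* Rˣ) := MonoidHom.toHomUnitsMulEquiv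
  refine eq_zero_of_mul_eq_self_left (b := e.symm χ α) ?_ ?_
  · exact fun h => hχ (Units.ext h)
  · rw [mul_sum]
    refine Fintype.sum_bijective (e.symm χ * ·) ?_ _ _ fun ψ => rfl
    have : (e.symm χ * ·) = e.symm ∘ (χ * ·) ∘ e := funext fun ψ => by simp
    rw [this]
    exact e.symm.bijective.comp ((Group.mulLeft_bijective χ).comp e.bijective)

variable [DecidableEq (G →* R)] {ι : Type*} [Fintype ι] (w : ι → R) (Ψ : ι → G →* R)

theorem sum_apply_inv_mul_sum_eq (ψ : G →* R) :
    ∑ α, ψ α⁻¹ * ∑ i, w i * Ψ i α = Fintype.card G * ∑ i with Ψ i = ψ, w i := by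
  calc ∑ α, ψ α⁻¹ * ∑ i, w i * Ψ i α = ∑ i, w i * ∑ α, Ψ i α * ψ α⁻¹ := by
        simp_rw [mul_sum]
        rw [sum_comm]
        exact sum_congr rfl fun i _ => sum_congr rfl fun α _ => by ring
    _ = ∑ i, if Ψ i = ψ then w i * Fintype.card G else 0 := by
        simp_rw [sum_apply_mul_apply_inv_eq_ite, mul_ite, mul_zero]
    _ = Fintype.card G * ∑ i with Ψ i = ψ, w i := by
        rw [← sum_filter, mul_sum]
        exact sum_congr rfl fun i _ => mul_comm _ _

theorem sum_mul_apply_eq_zero_of_sum_fiber_eq [Fintype (G →* R)]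
    [HasEnoughRootsOfUnity R (Monoid.exponent G)] {c : R}
    (hw : ∀ ψ, ∑ i with Ψ i = ψ, w i = c) {α : G} (hα : α ≠ 1) :
    ∑ i, w i * Ψ i α = 0 := by
  calc ∑ i, w i * Ψ i α = ∑ ψ : G →* R, (∑ i with Ψ i = ψ, w i) * ψ α := by
        rw [← sum_fiberwise univ Ψ]
        refine sum_congr rfl fun ψ _ => ?_
        rw [sum_mul]
        exact sum_congr rfl fun i hi => by rw [(mem_filter.1 hi).2]
    _ = 0 := by simp_rw [hw, ← mul_sum, sum_monoidHom_apply_eq_zero hα, mul_zero]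

end Characters

section GDual

variable {G X : Type*} [Group G] [MulAction G X] [Fintype X]

def dualTransform (Λ : X → X → ℂ) (f : X → ℂ) (i : X) : ℂ := ∑ x, f x * Λ i x

variable (G) in
def autocorrelation (f : X → ℂ) (α : G) : ℂ := ∑ x, f (α • x) * conj (f x)

theorem autocorrelation_one {f : X → ℂ} (hf : ∀ x, ‖f x‖ = 1) :
    autocorrelation G f 1 = Fintype.card X := by
  simp [autocorrelation, Complex.mul_conj', hf]

theorem sum_sq_norm_dualTransform_mul_apply [DecidableEq X] {Λ : X → X → ℂ} {Ψ : X → G →* ℂ}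
    (horth : ∀ i j, ∑ x, Λ i x * conj (Λ j x) = if i = j then (Fintype.card X : ℂ) else 0)
    (hlin : ∀ i (α : G) x, Λ i (α • x) = Ψ i α * Λ i x) (f : X → ℂ) (α : G) :
    ∑ i, (‖dualTransform Λ f i‖ : ℂ) ^ 2 * Ψ i α
      = Fintype.card X * conj (autocorrelation G f α) := by
  have hterm : ∀ i, (‖dualTransform Λ f i‖ : ℂ) ^ 2 * Ψ i α
      = ∑ x, ∑ y, f x * conj (f y) * (Λ i (α • x) * conj (Λ i y)) := fun i => by
    rw [← Complex.mul_conj', dualTransform, map_sum, sum_mul_sum, sum_mul]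
    refine sum_congr rfl fun x _ => ?_
    rw [sum_mul]
    refine sum_congr rfl fun y _ => ?_
    rw [hlin, map_mul]
    ring
  calc ∑ i, (‖dualTransform Λ f i‖ : ℂ) ^ 2 * Ψ i α
      = ∑ x, ∑ y, f x * conj (f y) * ∑ i, Λ i (α • x) * conj (Λ i y) := by
        simp_rw [hterm, mul_sum]
        rw [sum_comm]
        exact sum_congr rfl fun x _ => sum_comm
    _ = ∑ x, f x * conj (f (α • x)) * Fintype.card X := by
        simp_rw [orthogonal_cols_of_orthogonal_rows horth, mul_ite, mul_zero, sum_ite_eq]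
        simp
    _ = Fintype.card X * conj (autocorrelation G f α) := by
        simp only [autocorrelation, map_sum, map_mul, Complex.conj_conj, mul_sum]
        exact sum_congr rfl fun x _ => by ring

end GDual

theorem stmt15_general {G X : Type*} [CommGroup G] [Fintype G] [Fintype X] [DecidableEq X]
    [MulAction G X] [DecidableEq (G →* ℂ)]
    (Λ : X → (X → ℂ)) (Ψ : X → (G →* ℂ))
    (horth : ∀ i j : X, ∑ x : X, Λ i x * (starRingEnd ℂ) (Λ j x)
      = if i = j then (Fintype.card X : ℂ) else 0)
    (hlin : ∀ (i : X) (α : G) (x : X), Λ i (α • x) = Ψ i α * Λ i x)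
    (f : X → ℂ) (hf : ∀ x : X, ‖f x‖ = 1) :
    (∀ ψ : G →* ℂ,
        ∑ i ∈ Finset.univ.filter (fun i => Ψ i = ψ),
          ‖∑ x : X, f x * Λ i x‖ ^ 2
        = (Fintype.card X : ℝ) ^ 2 / (Fintype.card G : ℝ)) ↔
      (∀ α : G, α ≠ 1 → ∑ x : X, f (α • x) * (starRingEnd ℂ) (f x) = 0) := by
  have : NeZero (Monoid.exponent G : ℂ) := ⟨Nat.cast_ne_zero.2 Monoid.exponent_ne_zero_of_finite⟩
  have : Finite (G →* ℂ) :=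
    .of_equiv (G →* ℂˣ) (MonoidHom.toHomUnitsMulEquiv (M := ℂ)).symm.toEquiv
  have : Fintype (G →* ℂ) := .ofFinite _
  set w : X → ℂ := fun i => (‖dualTransform Λ f i‖ : ℂ) ^ 2
  have hkey : ∀ α : G, ∑ i, w i * Ψ i α = Fintype.card X * conj (autocorrelation G f α) :=
    sum_sq_norm_dualTransform_mul_apply horth hlin f
  have hm : (Fintype.card G : ℂ) ≠ 0 := Nat.cast_ne_zero.2 Fintype.card_ne_zero
  have hbent : ∀ ψ : G →* ℂ, ∑ i ∈ Finset.univ.filter (fun i => Ψ i = ψ),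
      ‖∑ x : X, f x * Λ i x‖ ^ 2 = (Fintype.card X : ℝ) ^ 2 / (Fintype.card G : ℝ) ↔
      ∑ i with Ψ i = ψ, w i = (Fintype.card X : ℂ) ^ 2 / Fintype.card G := fun ψ => by
    rw [← Complex.ofReal_inj]
    push_cast
    rfl
  simp_rw [hbent]
  refine ⟨fun hflat α hα => ?_, fun hbal ψ => ?_⟩
  · have h0 := sum_mul_apply_eq_zero_of_sum_fiber_eq w Ψ hflat hα
    rw [hkey] at h0
    rcases mul_eq_zero.1 h0 with hn | hzero
    · have : IsEmpty X := Fintype.card_eq_zero_iff.1 (by exact_mod_cast hn)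
      exact Fintype.sum_empty _
    · exact (map_eq_zero _).1 hzero
  · have hsum := sum_apply_inv_mul_sum_eq w Ψ ψ
    simp_rw [hkey] at hsum
    rw [sum_eq_single 1 fun α _ hα => by rw [show autocorrelation G f α = 0 from hbal α hα]; simp,
      autocorrelation_one hf] at hsum
    · rw [eq_div_iff hm]
      simpa [sq, mul_comm] using hsum.symm
    · simp

/-- A unitary function f on the G-set X is bent, i.e.
Σ_{λ ∈ (X̂)_ψ} |f̂(λ)|² = n²/m for every irreducible character ψ,
iff f has totally balanced derivatives. -/
theorem stmt15 {G X : Type*} [CommGroup G] [Fintype G] [Fintype X] [DecidableEq X]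
    [MulAction G X] [DecidableEq (G →* ℂ)]
    (Λ : X → (X → ℂ)) (Ψ : X → (G →* ℂ))
    (horth : ∀ i j : X, ∑ x : X, Λ i x * (starRingEnd ℂ) (Λ j x)
      = if i = j then (Fintype.card X : ℂ) else 0)
    (hlin : ∀ (i : X) (α : G) (x : X), Λ i (α • x) = Ψ i α * Λ i x)
    (hconj : ∀ i : X, ∃ j : X, (fun x => (starRingEnd ℂ) (Λ i x)) = Λ j)
    (f : X → ℂ) (hf : ∀ x : X, ‖f x‖ = 1) :
    (∀ ψ : G →* ℂ,
        ∑ i ∈ Finset.univ.filter (fun i => Ψ i = ψ),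
          ‖∑ x : X, f x * Λ i x‖ ^ 2
        = (Fintype.card X : ℝ) ^ 2 / (Fintype.card G : ℝ)) ↔
      (∀ α : G, α ≠ 1 → ∑ x : X, f (α • x) * (starRingEnd ℂ) (f x) = 0) :=
  stmt15_general Λ Ψ horth hlin f hf
end

section
/- If the G-action on X admits an irreducible character ψ of G for which there is no nonzero ψ-linear function X → ℂ, then there exists no bent function f : X → T. -/
/-!
Averaging a function `f` against `ψ` over the group, `g x = ∑ α, ψ α⁻¹ * f (α • x)`, always
gives a `ψ`-linear function, and expanding `∑ x, g x * conj (f x)` over `α` yields the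
autocorrelations of `f`, weighted by `ψ α⁻¹`. When all autocorrelations at `α ≠ 1` vanish only
the term `α = 1` survives, so this sum is `∑ x, ‖f x‖ ^ 2 = card X` for a unimodular `f`. If
`0` is the only `ψ`-linear function, then `g = 0` and the sum is `0`, a contradiction.
-/

open Finset

section CharProjection

variable {G X R : Type*} [Group G] [Fintype G] [MulAction G X] [Semiring R]

def charProjection (ψ : G →* R) (f : X → R) (x : X) : R :=
  ∑ α : G, ψ α⁻¹ * f (α • x)

theorem charProjection_smul (ψ : G →* R) (f : X → R) (β : G) (x : X) :
    charProjection ψ f (β • x) = ψ β * charProjection ψ f x := by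
  simp only [charProjection, mul_sum]
  refine Fintype.sum_equiv (Equiv.mulRight β) _ _ fun α => ?_
  rw [Equiv.coe_mulRight, mul_smul, mul_inv_rev, map_mul, ← mul_assoc (ψ β), ← mul_assoc (ψ β),
    ← map_mul, mul_inv_cancel, map_one, one_mul]

theorem sum_charProjection_mul [Fintype X] (ψ : G →* R) (f h : X → R) :
    ∑ x : X, charProjection ψ f x * h x = ∑ α : G, ψ α⁻¹ * ∑ x : X, f (α • x) * h x := by
  simp only [charProjection, sum_mul, mul_sum, mul_assoc]
  exact sum_comm

theorem sum_charProjection_mul_of_balanced [Fintype X] (ψ : G →* R) (f h : X → R)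
    (hbal : ∀ α : G, α ≠ 1 → ∑ x : X, f (α • x) * h x = 0) :
    ∑ x : X, charProjection ψ f x * h x = ∑ x : X, f x * h x := by
  rw [sum_charProjection_mul, Fintype.sum_eq_single 1 fun α hα => by rw [hbal α hα, mul_zero]]
  simp only [inv_one, map_one, one_smul, one_mul]

end CharProjection

/-- If for some irreducible character ψ of G there is no nonzero ψ-linear
function on X, then no bent function (equivalently, no unitary function with
totally balanced derivatives) exists on X. -/
theorem stmt16 {G X : Type*} [CommGroup G] [Fintype G] [Fintype X] [Nonempty X]
    [MulAction G X]
    (hψ : ∃ ψ : G →* ℂ, ∀ f : X → ℂ,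
      (∀ (α : G) (x : X), f (α • x) = ψ α * f x) → f = 0) :
    ¬ ∃ f : X → ℂ, (∀ x : X, ‖f x‖ = 1) ∧
      (∀ α : G, α ≠ 1 → ∑ x : X, f (α • x) * (starRingEnd ℂ) (f x) = 0) := by
  rintro ⟨f, hunit, hbal⟩
  obtain ⟨ψ, hψ⟩ := hψ
  have hzero : charProjection ψ f = 0 := hψ _ (charProjection_smul ψ f)
  have hcard : ∑ x : X, f x * (starRingEnd ℂ) (f x) = Fintype.card X := by
    simp [Complex.mul_conj', hunit]
  have hpairing := sum_charProjection_mul_of_balanced ψ f (fun x => (starRingEnd ℂ) (f x)) hbal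
  simp only [hzero, Pi.zero_apply, zero_mul, sum_const_zero, hcard] at hpairing
  exact Fintype.card_ne_zero (α := X) (by exact_mod_cast hpairing.symm)
end

section
/- For any unitary function f : X → T, the distance from f to the set of G-linear functions satisfies d(f, (ℂ^X)_G) ≤ √((m−1)n/m), with equality if and only if f is bent (equivalently, iff the lengths |f_ψ| of all classical components of f are equal). -/
/-!
The ψ-component `f_ψ` is the orthogonal projection of `f` onto the ψ-linear functions, so the
squared distance from `f` to that subspace is `‖f‖² - ‖f_ψ‖² = n - ‖f_ψ‖²`. Orthogonality of
the `m` characters gives Plancherel, `∑_ψ ‖f_ψ‖² = ‖f‖² = n`. Hence some `‖f_ψ‖²` is at least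
the mean `n / m`, which gives the bound; and the bound holds against every ψ-linear `g` exactly
when no `‖f_ψ‖²` exceeds the mean, i.e. when they are all equal.
-/

open Finset ComplexConjugate

namespace MonoidHom

variable {G : Type*} [CommGroup G]

def equivAddChar : (G →* ℂ) ≃ AddChar (Additive G) ℂ :=
  (AddChar.toMonoidHomEquiv (A := Additive G)).symm

variable [Fintype G]

lemma norm_apply_eq_one (ψ : G →* ℂ) (α : G) : ‖ψ α‖ = 1 :=
  Complex.norm_eq_one_of_pow_eq_one (by rw [← map_pow, pow_card_eq_one, map_one])
    Fintype.card_ne_zero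

lemma conj_apply (ψ : G →* ℂ) (α : G) : conj (ψ α) = ψ α⁻¹ := by
  rw [← Complex.inv_eq_conj (ψ.norm_apply_eq_one α)]
  exact (eq_inv_of_mul_eq_one_left (by rw [← map_mul, inv_mul_cancel, map_one])).symm

noncomputable instance : Fintype (G →* ℂ) := Fintype.ofEquiv _ equivAddChar.symm

lemma card_complex : Fintype.card (G →* ℂ) = Fintype.card G := by
  rw [Fintype.card_congr equivAddChar, AddChar.card_eq]
  exact Fintype.card_congr Additive.toMul

lemma sum_apply_eq_ite [DecidableEq G] (α : G) :
    ∑ ψ : G →* ℂ, ψ α = if α = 1 then (Fintype.card G : ℂ) else 0 := by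
  rw [← equivAddChar.symm.sum_comp]
  have h := AddChar.sum_apply_eq_ite (Additive.ofMul α)
  simp only [ofMul_eq_zero, Fintype.card_congr Additive.toMul] at h
  exact h

lemma sum_apply_mul_conj_apply [DecidableEq G] (α β : G) :
    ∑ ψ : G →* ℂ, ψ α * conj (ψ β) = if α = β then (Fintype.card G : ℂ) else 0 := by
  simp only [conj_apply, ← map_mul, sum_apply_eq_ite, mul_inv_eq_one]

lemma sum_norm_sum_apply_mul_sq (u : G → ℂ) :
    ∑ ψ : G →* ℂ, ‖∑ α, ψ α * u α‖ ^ 2 = Fintype.card G * ∑ α, ‖u α‖ ^ 2 := by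
  classical
  apply Complex.ofReal_injective
  push_cast
  simp only [← Complex.mul_conj']
  calc ∑ ψ : G →* ℂ, (∑ α, ψ α * u α) * conj (∑ β, ψ β * u β)
      = ∑ α, ∑ β, u β * conj (u α) * ∑ ψ : G →* ℂ, ψ β * conj (ψ α) := by
        simp only [map_sum, map_mul, sum_mul, mul_sum]
        rw [sum_comm]
        refine sum_congr rfl fun α _ => ?_
        rw [sum_comm]
        exact sum_congr rfl fun β _ => sum_congr rfl fun ψ _ => by ring
    _ = Fintype.card G * ∑ α, u α * conj (u α) := by
        simp [sum_apply_mul_conj_apply, mul_sum, mul_comm]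

end MonoidHom

lemma sum_norm_add_sq_of_sum_conj_mul_eq_zero {ι : Type*} [Fintype ι] {u v : ι → ℂ}
    (h : ∑ i, conj (u i) * v i = 0) :
    ∑ i, ‖u i + v i‖ ^ 2 = ∑ i, ‖u i‖ ^ 2 + ∑ i, ‖v i‖ ^ 2 := by
  have := norm_add_sq_eq_norm_sq_add_norm_sq_of_inner_eq_zero (𝕜 := ℂ)
    (WithLp.toLp 2 u) (WithLp.toLp 2 v) (by simpa [PiLp.inner_apply, mul_comm] using h)
  simpa [← sq, EuclideanSpace.norm_sq_eq] using this

section Semiinvariant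

variable {G X : Type*} [Monoid G] [MulAction G X] {ψ : G →* ℂ} {g h : X → ℂ}

/-- The paper's ψ-linear functions, forming the subspace `(ℂ^X)_ψ`. -/
def IsSemiinvariant (ψ : G →* ℂ) (g : X → ℂ) : Prop :=
  ∀ (α : G) (x : X), g (α • x) = ψ α * g x

lemma isSemiinvariant_zero (ψ : G →* ℂ) : IsSemiinvariant ψ (0 : X → ℂ) :=
  fun _ _ => (mul_zero _).symm

lemma IsSemiinvariant.sub (hg : IsSemiinvariant ψ g) (hh : IsSemiinvariant ψ h) :
    IsSemiinvariant ψ (g - h) := fun α x => by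
  simp only [Pi.sub_apply, hg α x, hh α x, mul_sub]

end Semiinvariant

section Component

variable {G X : Type*} [CommGroup G] [Fintype G] [MulAction G X]

/-- The paper's ψ-component `f_ψ = (1/m) ψ ∗ f`. -/
noncomputable def component (ψ : G →* ℂ) (f : X → ℂ) (x : X) : ℂ :=
  (1 / (Fintype.card G : ℂ)) * ∑ α : G, ψ α * f (α⁻¹ • x)

lemma isSemiinvariant_component (ψ : G →* ℂ) (f : X → ℂ) :
    IsSemiinvariant ψ (component ψ f) := fun β x => by
  have shift : ∑ α, ψ α * f (α⁻¹ • β • x) = ψ β * ∑ α, ψ α * f (α⁻¹ • x) := by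
    rw [← Equiv.sum_comp (Equiv.mulLeft β), mul_sum]
    refine sum_congr rfl fun α _ => ?_
    rw [Equiv.coe_mulLeft, map_mul, mul_inv_rev, mul_smul, inv_smul_smul, mul_assoc]
  simp only [component, shift]
  ring

variable [Fintype X]

lemma sum_conj_mul_component {ψ : G →* ℂ} {g : X → ℂ} (hg : IsSemiinvariant ψ g) (f : X → ℂ) :
    ∑ x, conj (g x) * component ψ f x = ∑ x, conj (g x) * f x := by
  set S := ∑ x, conj (g x) * f x
  have translate (α : G) : ∑ x, conj (g x) * f (α⁻¹ • x) = conj (ψ α) * S := by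
    rw [← Equiv.sum_comp (MulAction.toPerm α), mul_sum]
    refine sum_congr rfl fun x _ => ?_
    rw [MulAction.toPerm_apply, inv_smul_smul, hg, map_mul, mul_assoc]
  have hm : (Fintype.card G : ℂ) ≠ 0 := Nat.cast_ne_zero.mpr Fintype.card_ne_zero
  calc ∑ x, conj (g x) * component ψ f x
      = 1 / (Fintype.card G : ℂ) * ∑ α : G, ψ α * ∑ x, conj (g x) * f (α⁻¹ • x) := by
        simp only [component, mul_sum]
        rw [sum_comm]
        exact sum_congr rfl fun x _ => sum_congr rfl fun α _ => by ring
    _ = 1 / (Fintype.card G : ℂ) * ∑ α : G, S := by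
        simp only [translate, ← mul_assoc, Complex.mul_conj', ψ.norm_apply_eq_one]
        simp
    _ = S := by
        rw [sum_const, card_univ, nsmul_eq_mul]
        field_simp

lemma sum_norm_sub_sq_eq_of_isSemiinvariant {ψ : G →* ℂ} {g : X → ℂ}
    (hg : IsSemiinvariant ψ g) (f : X → ℂ) :
    ∑ x, ‖f x - g x‖ ^ 2
      = ∑ x, ‖f x - component ψ f x‖ ^ 2 + ∑ x, ‖component ψ f x - g x‖ ^ 2 := by
  have horth : ∑ x, conj (component ψ f x - g x) * (f x - component ψ f x) = 0 := by
    have h := sum_conj_mul_component ((isSemiinvariant_component ψ f).sub hg) f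
    simp only [Pi.sub_apply] at h
    simp only [mul_sub, sum_sub_distrib, h, sub_self]
  rw [add_comm, ← sum_norm_add_sq_of_sum_conj_mul_eq_zero horth]
  simp only [sub_add_sub_cancel']

lemma sum_norm_sub_component_sq (ψ : G →* ℂ) (f : X → ℂ) :
    ∑ x, ‖f x - component ψ f x‖ ^ 2 = ∑ x, ‖f x‖ ^ 2 - ∑ x, ‖component ψ f x‖ ^ 2 := by
  have h := sum_norm_sub_sq_eq_of_isSemiinvariant (isSemiinvariant_zero ψ) f
  simp only [Pi.zero_apply, sub_zero] at h
  exact eq_sub_of_add_eq h.symm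

lemma sum_norm_sub_component_sq_le {ψ : G →* ℂ} {g : X → ℂ} (hg : IsSemiinvariant ψ g)
    (f : X → ℂ) : ∑ x, ‖f x - component ψ f x‖ ^ 2 ≤ ∑ x, ‖f x - g x‖ ^ 2 := by
  rw [sum_norm_sub_sq_eq_of_isSemiinvariant hg f]
  exact le_add_of_nonneg_right (sum_nonneg fun x _ => sq_nonneg _)

lemma sum_sum_norm_component_sq (f : X → ℂ) :
    ∑ ψ : G →* ℂ, ∑ x, ‖component ψ f x‖ ^ 2 = ∑ x, ‖f x‖ ^ 2 := by
  have hm : (Fintype.card G : ℝ) ≠ 0 := Nat.cast_ne_zero.mpr Fintype.card_ne_zero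
  have translate (α : G) : ∑ x, ‖f (α⁻¹ • x)‖ ^ 2 = ∑ x, ‖f x‖ ^ 2 :=
    Equiv.sum_comp (MulAction.toPerm α⁻¹) fun x => ‖f x‖ ^ 2
  calc ∑ ψ : G →* ℂ, ∑ x, ‖component ψ f x‖ ^ 2
      = ∑ x, (1 / (Fintype.card G : ℝ)) ^ 2 *
          ∑ ψ : G →* ℂ, ‖∑ α, ψ α * f (α⁻¹ • x)‖ ^ 2 := by
        rw [sum_comm]
        refine sum_congr rfl fun x _ => ?_
        rw [mul_sum]
        simp only [component, norm_mul, mul_pow, norm_div, norm_one, Complex.norm_natCast]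
    _ = 1 / (Fintype.card G : ℝ) * ∑ α : G, ∑ x, ‖f (α⁻¹ • x)‖ ^ 2 := by
        simp only [MonoidHom.sum_norm_sum_apply_mul_sq, mul_sum]
        rw [sum_comm]
        refine sum_congr rfl fun α _ => sum_congr rfl fun x _ => ?_
        field_simp
    _ = ∑ x, ‖f x‖ ^ 2 := by
        simp only [translate, sum_const, card_univ, nsmul_eq_mul]
        field_simp

end Component

section Average

variable {ι : Type*} [Fintype ι] [Nonempty ι]

lemma exists_sum_div_card_le (c : ι → ℝ) : ∃ i, (∑ j, c j) / Fintype.card ι ≤ c i := by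
  have hn : (Fintype.card ι : ℝ) ≠ 0 := Nat.cast_ne_zero.mpr Fintype.card_ne_zero
  obtain ⟨i, -, hi⟩ := exists_le_of_sum_le (f := fun _ => (∑ j, c j) / Fintype.card ι) (g := c)
    univ_nonempty (by rw [sum_const, card_univ, nsmul_eq_mul, mul_div_cancel₀ _ hn])
  exact ⟨i, hi⟩

lemma forall_le_sum_div_card_iff (c : ι → ℝ) :
    (∀ i, c i ≤ (∑ j, c j) / Fintype.card ι) ↔ ∀ i j, c i = c j := by
  have hn : (Fintype.card ι : ℝ) ≠ 0 := Nat.cast_ne_zero.mpr Fintype.card_ne_zero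
  constructor
  · intro h
    have hmean := (sum_eq_sum_iff_of_le fun i _ => h i).mp
      (by rw [sum_const, card_univ, nsmul_eq_mul, mul_div_cancel₀ _ hn])
    exact fun i j => (hmean i (mem_univ i)).trans (hmean j (mem_univ j)).symm
  · intro h i
    rw [sum_congr rfl fun j _ => h j i, sum_const, card_univ, nsmul_eq_mul,
      mul_div_cancel_left₀ _ hn]

end Average

/-- For a unitary f : X → T, the distance from f to the set of G-linear
functions is at most √((m−1)n/m); the bound is attained exactly when f is
bent, i.e. when all classical components of f have the same length. -/
theorem stmt17 {G X : Type*} [CommGroup G] [Fintype G] [Fintype X] [MulAction G X]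
    (f : X → ℂ) (hf : ∀ x : X, ‖(f x)‖ = 1) :
    (∃ g : X → ℂ, (∃ ψ : G →* ℂ, ∀ (α : G) (x : X), g (α • x) = ψ α * g x) ∧
        ∑ x : X, ‖(f x - g x)‖ ^ 2
          ≤ ((Fintype.card G : ℝ) - 1) * (Fintype.card X) / (Fintype.card G)) ∧
    ((∀ g : X → ℂ, (∃ ψ : G →* ℂ, ∀ (α : G) (x : X), g (α • x) = ψ α * g x) →
        ((Fintype.card G : ℝ) - 1) * (Fintype.card X) / (Fintype.card G)
          ≤ ∑ x : X, ‖(f x - g x)‖ ^ 2) ↔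
      (∀ ψ φ : G →* ℂ,
        ∑ x : X, ‖((1 / (Fintype.card G : ℂ)) *
            ∑ α : G, ψ α * f (α⁻¹ • x))‖ ^ 2
          = ∑ x : X, ‖((1 / (Fintype.card G : ℂ)) *
            ∑ α : G, φ α * f (α⁻¹ • x))‖ ^ 2)) := by
  set c : (G →* ℂ) → ℝ := fun ψ => ∑ x, ‖component ψ f x‖ ^ 2
  have hnorm : ∑ x, ‖f x‖ ^ 2 = Fintype.card X := by simp [hf]
  have hmean : (∑ ψ, c ψ) / Fintype.card (G →* ℂ) = Fintype.card X / Fintype.card G := by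
    rw [sum_sum_norm_component_sq, hnorm, MonoidHom.card_complex]
  have hdist (ψ : G →* ℂ) : ∑ x, ‖f x - component ψ f x‖ ^ 2 = Fintype.card X - c ψ := by
    rw [sum_norm_sub_component_sq, hnorm]
  have hbound : ((Fintype.card G : ℝ) - 1) * Fintype.card X / Fintype.card G
      = Fintype.card X - Fintype.card X / Fintype.card G := by
    have : (Fintype.card G : ℝ) ≠ 0 := Nat.cast_ne_zero.mpr Fintype.card_ne_zero
    field_simp
  rw [hbound]
  refine ⟨?_, Iff.trans ?_ (forall_le_sum_div_card_iff c)⟩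
  · obtain ⟨ψ, hψ⟩ := exists_sum_div_card_le c
    refine ⟨component ψ f, ⟨ψ, isSemiinvariant_component ψ f⟩, ?_⟩
    rw [hdist, ← hmean]
    linarith
  · rw [hmean]
    refine ⟨fun h ψ => ?_, fun h g ⟨ψ, hg⟩ => ?_⟩
    · have := h _ ⟨ψ, isSemiinvariant_component ψ f⟩
      rw [hdist] at this
      linarith
    · have := sum_norm_sub_component_sq_le hg f
      rw [hdist] at this
      linarith [h ψ]
end

section
/- A function f : X → H from a finite G-set X to a finite abelian group H is G-perfect nonlinear (for every non-identity α ∈ G, the derivative x ↦ f(αx)f(x)⁻¹ takes each value of H exactly |X|/|H| times) if and only if for every nontrivial irreducible character ξ of H, the composition ξ∘f : X → ℂ has totally balanced derivatives, i.e., Σ_{x∈X} ξ(f(αx)f(x)⁻¹) = 0 for all α ≠ 1. -/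
/-!
Fix `α ≠ 1` and write `g x = f (α • x) * (f x)⁻¹`. Grouping `∑ x, ξ (g x)` by the value of `g`
turns it into `∑ h, N h * ξ h` with `N h = #{x | g x = h}`, so both conditions say something about
the Fourier coefficients of the counting function `N`. If `N` is constant, these vanish at every
nontrivial `ξ` since `∑ h, ξ h = 0`. Conversely, orthogonality of the characters recovers
`|H| * N h₀ = ∑ ξ, ξ h₀⁻¹ * ∑ x, ξ (g x)`, and only `ξ = 1` contributes, giving `|X|`.
-/

open Finset Fintype

section Characters

variable {X H : Type*} [Fintype X] [CommGroup H] [Fintype H] [DecidableEq H]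

lemma sum_apply_comp_eq_zero_of_card_filter_eq (g : X → H) {n : ℕ}
    (hg : ∀ h, #{x | g x = h} = n) {ξ : H →* ℂ} (hξ : ξ ≠ 1) : ∑ x, ξ (g x) = 0 := by
  rw [← sum_fiberwise' univ g ξ]
  simp only [sum_const, hg, nsmul_eq_mul, ← mul_sum, sum_hom_units_eq_zero ξ hξ, mul_zero]

lemma AddChar.sum_apply_ofMul_eq_ite (h : H) :
    ∑ ψ : AddChar (Additive H) ℂ, ψ (.ofMul h) = if h = 1 then (card H : ℂ) else 0 := by
  simpa using AddChar.sum_apply_eq_ite (Additive.ofMul h)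

/- The characters `H →* ℂ` are indexed by `AddChar (Additive H) ℂ` (via `toMonoidHomEquiv`),
where Mathlib provides their finiteness and the orthogonality relations. -/
lemma card_mul_card_filter_eq_sum_addChar (g : X → H) (h₀ : H) :
    (card H * #{x | g x = h₀} : ℂ) =
      ∑ ψ : AddChar (Additive H) ℂ, ψ (.ofMul h₀⁻¹) * ∑ x, ψ (.ofMul (g x)) := by
  simp_rw [mul_sum, ← AddChar.map_add_eq_mul]
  rw [sum_comm]
  have hfiber (x : X) : ∑ ψ : AddChar (Additive H) ℂ, ψ (.ofMul h₀⁻¹ + .ofMul (g x)) =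
      if g x = h₀ then (card H : ℂ) else 0 := by
    rw [← ofMul_mul, AddChar.sum_apply_ofMul_eq_ite]
    exact if_congr (inv_mul_eq_one.trans eq_comm) rfl rfl
  simp only [hfiber, ← sum_filter, sum_const, nsmul_eq_mul, mul_comm]

lemma card_filter_eq_div_of_sum_apply_comp_eq_zero (g : X → H)
    (hg : ∀ ξ : H →* ℂ, ξ ≠ 1 → ∑ x, ξ (g x) = 0) (h₀ : H) :
    #{x | g x = h₀} = card X / card H := by
  have hcount : (card H * #{x | g x = h₀} : ℂ) = card X := by
    rw [card_mul_card_filter_eq_sum_addChar, sum_eq_single 0 _ (by simp)]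
    · simp
    intro ψ _ hψ
    have hξ : (AddChar.toMonoidHomEquiv ψ : H →* ℂ) ≠ 1 :=
      fun h ↦ hψ (AddChar.toMonoidHomEquiv.injective h)
    exact mul_eq_zero_of_right _ (hg _ hξ)
  exact (Nat.div_eq_of_eq_mul_right card_pos (by exact_mod_cast hcount.symm)).symm

lemma card_filter_eq_div_iff_sum_apply_comp_eq_zero (g : X → H) :
    (∀ h, #{x | g x = h} = card X / card H) ↔ ∀ ξ : H →* ℂ, ξ ≠ 1 → ∑ x, ξ (g x) = 0 :=
  ⟨fun hg _ ↦ sum_apply_comp_eq_zero_of_card_filter_eq g hg,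
    card_filter_eq_div_of_sum_apply_comp_eq_zero g⟩

end Characters

theorem stmt19_general {G X H : Type*} [CommGroup G] [Fintype X] [MulAction G X]
    [CommGroup H] [Fintype H] [DecidableEq H]
    (f : X → H) :
    (∀ α : G, α ≠ 1 → ∀ h : H,
        (Finset.univ.filter (fun x : X => f (α • x) * (f x)⁻¹ = h)).card
          = Fintype.card X / Fintype.card H) ↔
      (∀ ξ : H →* ℂ, ξ ≠ 1 → ∀ α : G, α ≠ 1 →
        ∑ x : X, ξ (f (α • x) * (f x)⁻¹) = 0) := by
  simp only [card_filter_eq_div_iff_sum_apply_comp_eq_zero]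
  exact ⟨fun h ξ hξ α hα ↦ h α hα ξ hξ, fun h α hα ξ hξ ↦ h ξ hξ α hα⟩

/-- f : X → H is G-perfect nonlinear iff for every nontrivial irreducible
character ξ of H the composition ξ∘f has totally balanced derivatives. -/
theorem stmt19 {G X H : Type*} [CommGroup G] [Fintype G] [Fintype X] [MulAction G X]
    [CommGroup H] [Fintype H] [DecidableEq H]
    (f : X → H) (hdvd : Fintype.card H ∣ Fintype.card X) :
    (∀ α : G, α ≠ 1 → ∀ h : H,
        (Finset.univ.filter (fun x : X => f (α • x) * (f x)⁻¹ = h)).card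
          = Fintype.card X / Fintype.card H) ↔
      (∀ ξ : H →* ℂ, ξ ≠ 1 → ∀ α : G, α ≠ 1 →
        ∑ x : X, ξ (f (α • x) * (f x)⁻¹) = 0) :=
  stmt19_general f
end
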